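/- Under Assumption 3(a), for every h ∈ ℝ^d the functional G_h : S(H) → ℝ is twice Fréchet differentiable; its gradient at V ∈ S(H) is ∇G_h(V) = −E[(Y(h) − V)/‖Y(h) − V‖_F], and its second derivative at V is the bounded linear operator on S(H) given by A ↦ E[ (1/‖Y(h) − V‖_F)( A − ⟨Y(h) − V, A⟩_F (Y(h) − V)/‖Y(h) − V‖_F² ) ]. -/

import Mathlib

/-!
Both derivatives come from differentiating under the integral sign at `V`, in the form that
only asks for a Lipschitz bound *at* `V` (`hasFDerivAt_integral_of_dominated_loc_of_lip'`).
Pointwise, `W ↦ ‖Y - W‖` is `1`-Lipschitz and differentiable wherever `Y ≠ W`, and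
`x ↦ x / ‖x‖` has derivative `‖v‖⁻¹ (I - v vᵀ / ‖v‖²)` at `v ≠ 0` and satisfies
`‖x / ‖x‖ - v / ‖v‖‖ ≤ 2 ‖x - v‖ / ‖v‖`. Assumption 3(a) forces `Y ≠ V` almost surely and makes
`‖Y - V‖⁻¹` integrable, which is exactly the dominating function this bound needs.
-/

open MeasureTheory ProbabilityTheory Filter
open scoped ENNReal NNReal RealInnerProductSpace BigOperators

noncomputable section

/-- The space `S(H)` of `d × d` real matrices, viewed as a Euclidean space, so that its
norm is the Frobenius norm and its inner product `⟪A, B⟫ = ∑ i j, A i j * B i j = tr (Aᵀ B)`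
is the Frobenius inner product. -/
abbrev Mat (d : ℕ) := EuclideanSpace ℝ (Fin d × Fin d)

/-- `Y(h) = (x − h)(x − h)ᵀ`. -/
def Ymat {d : ℕ} (x h : EuclideanSpace ℝ (Fin d)) : Mat d :=
  (WithLp.equiv 2 _).symm (fun p => (x p.1 - h p.1) * (x p.2 - h p.2))

variable {d : ℕ} {Ω : Type*} [MeasurableSpace Ω]

/-- `G_h(V) = E[‖Y(h) − V‖_F − ‖Y(h)‖_F]`. -/
def Gfun (P : Measure Ω) (X : Ω → EuclideanSpace ℝ (Fin d))
    (h : EuclideanSpace ℝ (Fin d)) (V : Mat d) : ℝ :=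
  ∫ ω, (‖Ymat (X ω) h - V‖ - ‖Ymat (X ω) h‖) ∂P

/-- The gradient `∇G_h(V) = −E[(Y(h) − V)/‖Y(h) − V‖_F]`. -/
def gradG (P : Measure Ω) (X : Ω → EuclideanSpace ℝ (Fin d))
    (h : EuclideanSpace ℝ (Fin d)) (V : Mat d) : Mat d :=
  - ∫ ω, ‖Ymat (X ω) h - V‖⁻¹ • (Ymat (X ω) h - V) ∂P

/-- The Hessian operator
`∇²G_h(V)(A) = E[(1/‖Y(h) − V‖_F)(A − ⟪Y(h) − V, A⟫_F (Y(h) − V)/‖Y(h) − V‖_F²)]`. -/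
def hessG (P : Measure Ω) (X : Ω → EuclideanSpace ℝ (Fin d))
    (h : EuclideanSpace ℝ (Fin d)) (V : Mat d) (A : Mat d) : Mat d :=
  ∫ ω, ‖Ymat (X ω) h - V‖⁻¹ •
    (A - (‖Ymat (X ω) h - V‖ ^ 2)⁻¹ • (⟪Ymat (X ω) h - V, A⟫ • (Ymat (X ω) h - V))) ∂P

namespace NormedSpace

variable {E : Type*} [NormedAddCommGroup E] [InnerProductSpace ℝ E]

theorem norm_normalize_le (x : E) : ‖normalize x‖ ≤ 1 := by
  rcases eq_or_ne x 0 with rfl | hx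
  · simp
  · exact (norm_normalize hx).le

theorem norm_normalize_sub_normalize_le {v : E} (hv : v ≠ 0) (x : E) :
    ‖normalize x - normalize v‖ ≤ 2 * ‖v‖⁻¹ * ‖x - v‖ := by
  have hv' : 0 < ‖v‖ := norm_pos_iff.2 hv
  rcases eq_or_ne x 0 with rfl | hx
  · simp [norm_normalize hv, hv'.ne']
  have hx' : 0 < ‖x‖ := norm_pos_iff.2 hx
  have hsplit : normalize x - normalize v = (‖x‖⁻¹ - ‖v‖⁻¹) • x + ‖v‖⁻¹ • (x - v) := by
    simp only [normalize, sub_smul, smul_sub]; abel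
  have hcoef : |‖x‖⁻¹ - ‖v‖⁻¹| * ‖x‖ = ‖v‖⁻¹ * |‖v‖ - ‖x‖| := by
    rw [inv_sub_inv hx'.ne' hv'.ne', abs_div, abs_of_pos (mul_pos hx' hv')]
    field_simp
  calc ‖normalize x - normalize v‖
      ≤ |‖x‖⁻¹ - ‖v‖⁻¹| * ‖x‖ + ‖v‖⁻¹ * ‖x - v‖ := by
        rw [hsplit]
        refine (norm_add_le _ _).trans_eq ?_
        rw [norm_smul, norm_smul, Real.norm_eq_abs, norm_inv, norm_norm]
    _ ≤ ‖v‖⁻¹ * ‖x - v‖ + ‖v‖⁻¹ * ‖x - v‖ := by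
        rw [hcoef]
        gcongr
        exact (abs_norm_sub_norm_le v x).trans_eq (norm_sub_rev v x)
    _ = 2 * ‖v‖⁻¹ * ‖x - v‖ := by ring

theorem hasFDerivAt_norm_of_ne_zero {v : E} (hv : v ≠ 0) :
    HasFDerivAt (‖·‖) (innerSL ℝ (normalize v)) v := by
  have h := (hasStrictFDerivAt_norm_sq v).hasFDerivAt.sqrt (by positivity)
  simp only [Real.sqrt_sq (norm_nonneg _)] at h
  refine h.congr_fderiv (ContinuousLinearMap.ext fun A => ?_)
  simp only [normalize, map_smul, smul_apply, coe_innerSL_apply,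
    smul_eq_mul, nsmul_eq_mul, Nat.cast_ofNat]
  field_simp

def normalizeDeriv (v : E) : E →L[ℝ] E :=
  ‖v‖⁻¹ • (ContinuousLinearMap.id ℝ E - (‖v‖ ^ 2)⁻¹ • (innerSL ℝ v).smulRight v)

theorem normalizeDeriv_apply (v A : E) :
    normalizeDeriv v A = ‖v‖⁻¹ • (A - (‖v‖ ^ 2)⁻¹ • (⟪v, A⟫ • v)) := by
  simp [normalizeDeriv]

theorem hasFDerivAt_normalize {v : E} (hv : v ≠ 0) :
    HasFDerivAt normalize (normalizeDeriv v) v := by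
  have h : HasFDerivAt (fun x : E => ‖x‖⁻¹ • x) _ v :=
    ((hasDerivAt_inv (norm_ne_zero_iff.2 hv)).comp_hasFDerivAt v
      (hasFDerivAt_norm_of_ne_zero hv)).smul (hasFDerivAt_id v)
  refine h.congr_fderiv (ContinuousLinearMap.ext fun A => ?_)
  simp only [normalizeDeriv_apply, Function.comp_apply, normalize, map_smul,
    add_apply, smul_apply, ContinuousLinearMap.id_apply,
    ContinuousLinearMap.smulRight_apply, coe_innerSL_apply, smul_eq_mul]
  module

end NormedSpace

section InvNorm

variable {F : Type*} [NormedAddCommGroup F] {μ : Measure Ω} {Y : Ω → F}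

theorem ae_ne_zero_of_lintegral_inv_nnnorm_ne_top (hY : AEStronglyMeasurable Y μ)
    (h : ∫⁻ ω, (‖Y ω‖₊ : ℝ≥0∞)⁻¹ ∂μ ≠ ∞) : ∀ᵐ ω ∂μ, Y ω ≠ 0 :=
  (ae_lt_top' hY.nnnorm.aemeasurable.coe_nnreal_ennreal.inv h).mono fun ω hω hY0 => by
    simp [hY0] at hω

theorem integrable_inv_norm_of_lintegral_inv_nnnorm_ne_top (hY : AEStronglyMeasurable Y μ)
    (h : ∫⁻ ω, (‖Y ω‖₊ : ℝ≥0∞)⁻¹ ∂μ ≠ ∞) : Integrable (fun ω => ‖Y ω‖⁻¹) μ := by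
  refine ⟨hY.norm.aemeasurable.inv.aestronglyMeasurable,
    (lintegral_mono fun ω => ?_).trans_lt h.lt_top⟩
  rcases eq_or_ne (Y ω) 0 with hY0 | hY0 <;> simp [hY0]

end InvNorm

section Measurability

variable {E : Type*} [NormedAddCommGroup E] [InnerProductSpace ℝ E] {μ : Measure Ω} {Y : Ω → E}

theorem MeasureTheory.AEStronglyMeasurable.normalize (hY : AEStronglyMeasurable Y μ) :
    AEStronglyMeasurable (fun ω => NormedSpace.normalize (Y ω)) μ :=
  hY.norm.aemeasurable.inv.aestronglyMeasurable.smul hY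

theorem MeasureTheory.AEStronglyMeasurable.normalizeDeriv (hY : AEStronglyMeasurable Y μ) :
    AEStronglyMeasurable (fun ω => NormedSpace.normalizeDeriv (Y ω)) μ := by
  have hproj : Continuous fun v : E => (innerSL ℝ v).smulRight v :=
    (ContinuousLinearMap.smulRightL ℝ E E).continuous₂.comp
      ((innerSL ℝ).continuous.prodMk continuous_id)
  exact hY.norm.aemeasurable.inv.aestronglyMeasurable.smul (aestronglyMeasurable_const.sub
    ((hY.norm.aemeasurable.pow_const 2).inv.aestronglyMeasurable.smul
      (hproj.comp_aestronglyMeasurable hY)))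

end Measurability

section Integral

variable {E : Type*} [NormedAddCommGroup E] [InnerProductSpace ℝ E]
  {μ : Measure Ω} [IsFiniteMeasure μ] {Y : Ω → E}

open NormedSpace in
theorem hasFDerivAt_integral_norm_sub_sub_norm [CompleteSpace E]
    (hY : AEStronglyMeasurable Y μ) {V : E} (hV : ∀ᵐ ω ∂μ, Y ω ≠ V) :
    HasFDerivAt (fun W => ∫ ω, (‖Y ω - W‖ - ‖Y ω‖) ∂μ)
      (innerSL ℝ (-∫ ω, normalize (Y ω - V) ∂μ)) V := by
  have hYV : AEStronglyMeasurable (fun ω => Y ω - V) μ := hY.sub aestronglyMeasurable_const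
  have hint : Integrable (fun ω => normalize (Y ω - V)) μ :=
    .of_bound hYV.normalize 1 (ae_of_all _ fun _ => norm_normalize_le _)
  have hlip : ∀ ω W, |‖Y ω - W‖ - ‖Y ω - V‖| ≤ ‖W - V‖ := fun ω W =>
    (abs_norm_sub_norm_le _ _).trans_eq (by rw [sub_sub_sub_cancel_left, norm_sub_rev])
  obtain ⟨-, h⟩ := hasFDerivAt_integral_of_dominated_loc_of_lip'
    (F := fun W ω => ‖Y ω - W‖ - ‖Y ω‖) (F' := fun ω => -innerSL ℝ (normalize (Y ω - V)))
    (bound := fun _ => 1) Filter.univ_mem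
    (fun W _ => (hY.sub aestronglyMeasurable_const).norm.sub hY.norm)
    (.of_bound (hYV.norm.sub hY.norm) ‖V‖
      (ae_of_all _ fun ω => by simpa using abs_norm_sub_norm_le (Y ω - V) (Y ω)))
    ((innerSL ℝ).continuous.comp_aestronglyMeasurable hYV.normalize).neg
    (ae_of_all _ fun ω W _ => by simpa using hlip ω W)
    (integrable_const 1)
    (hV.mono fun ω hω => by
      have := ((hasFDerivAt_norm_of_ne_zero (sub_ne_zero.2 hω)).comp V
        ((hasFDerivAt_id V).const_sub (Y ω))).sub_const ‖Y ω‖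
      refine this.congr_fderiv ?_
      ext; simp)
  rwa [integral_neg, ContinuousLinearMap.integral_comp_comm _ hint, ← map_neg] at h

open NormedSpace in
theorem hasFDerivAt_neg_integral_normalize_sub (hY : AEStronglyMeasurable Y μ) {V : E}
    (hV : ∀ᵐ ω ∂μ, Y ω ≠ V) (hinv : Integrable (fun ω => ‖Y ω - V‖⁻¹) μ) :
    Integrable (fun ω => normalizeDeriv (Y ω - V)) μ ∧
      HasFDerivAt (fun W => -∫ ω, normalize (Y ω - W) ∂μ)
        (∫ ω, normalizeDeriv (Y ω - V) ∂μ) V := by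
  have hYV : AEStronglyMeasurable (fun ω => Y ω - V) μ := hY.sub aestronglyMeasurable_const
  have h := hasFDerivAt_integral_of_dominated_loc_of_lip'
    (F := fun W ω => -normalize (Y ω - W)) (F' := fun ω => normalizeDeriv (Y ω - V))
    (bound := fun ω => 2 * ‖Y ω - V‖⁻¹) Filter.univ_mem
    (fun W _ => (hY.sub aestronglyMeasurable_const).normalize.neg)
    (.of_bound hYV.normalize.neg 1 (ae_of_all _ fun _ => by simpa using norm_normalize_le _))
    hYV.normalizeDeriv
    (hV.mono fun ω hω W _ => calc
      _ = ‖normalize (Y ω - W) - normalize (Y ω - V)‖ := by rw [neg_sub_neg, norm_sub_rev]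
      _ ≤ 2 * ‖Y ω - V‖⁻¹ * ‖(Y ω - W) - (Y ω - V)‖ :=
        norm_normalize_sub_normalize_le (sub_ne_zero.2 hω) _
      _ = 2 * ‖Y ω - V‖⁻¹ * ‖W - V‖ := by rw [sub_sub_sub_cancel_left, norm_sub_rev V W])
    (hinv.const_mul 2)
    (hV.mono fun ω hω => by
      have := ((hasFDerivAt_normalize (sub_ne_zero.2 hω)).comp V
        ((hasFDerivAt_id V).const_sub (Y ω))).neg
      refine this.congr_fderiv ?_
      ext; simp)
  simpa only [integral_neg] using h

end Integral

theorem continuous_Ymat {d : ℕ} (h : EuclideanSpace ℝ (Fin d)) :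
    Continuous fun x => Ymat x h := by
  have hx : Continuous fun x : EuclideanSpace ℝ (Fin d) => x.ofLp := PiLp.continuous_ofLp 2 _
  exact (PiLp.continuous_toLp 2 _).comp (continuous_pi fun p => by fun_prop)

theorem stmt_17_general
    {d : ℕ} (P : Measure Ω) [IsProbabilityMeasure P]
    (X : Ω → EuclideanSpace ℝ (Fin d)) (hX : Measurable X)
    -- Assumption 3(a)
    (C : ℝ)
    (hA3 : ∀ (h : EuclideanSpace ℝ (Fin d)) (V : Mat d),
      (∫⁻ ω, (‖Ymat (X ω) h - V‖₊ : ℝ≥0∞)⁻¹ ∂P) ≤ ENNReal.ofReal C) :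
    ∀ (h : EuclideanSpace ℝ (Fin d)) (V : Mat d),
      HasFDerivAt (fun W => Gfun P X h W) (innerSL ℝ (gradG P X h V)) V ∧
      ∃ Hop : Mat d →L[ℝ] Mat d, (∀ A : Mat d, Hop A = hessG P X h V A) ∧
        HasFDerivAt (fun W => gradG P X h W) Hop V := by
  intro h V
  have hY : AEStronglyMeasurable (fun ω => Ymat (X ω) h) P :=
    (continuous_Ymat h).comp_aestronglyMeasurable hX.aestronglyMeasurable
  have hYV := hY.sub (aestronglyMeasurable_const (b := V))
  have hfin := ne_top_of_le_ne_top ENNReal.ofReal_ne_top (hA3 h V)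
  have hV : ∀ᵐ ω ∂P, Ymat (X ω) h ≠ V :=
    (ae_ne_zero_of_lintegral_inv_nnnorm_ne_top hYV hfin).mono fun _ => sub_ne_zero.1
  obtain ⟨hint, hhess⟩ := hasFDerivAt_neg_integral_normalize_sub hY hV
    (integrable_inv_norm_of_lintegral_inv_nnnorm_ne_top hYV hfin)
  refine ⟨hasFDerivAt_integral_norm_sub_sub_norm hY hV, _, fun A => ?_, hhess⟩
  rw [ContinuousLinearMap.integral_apply hint]
  simp only [NormedSpace.normalizeDeriv_apply]
  rfl

/-- Under Assumption 3(a), for every `h` the functional `G_h` is twice Fréchet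
differentiable on `S(H)`: its Fréchet derivative at `V` is `W ↦ ⟪∇G_h(V), W⟫_F` with
`∇G_h(V) = −E[(Y(h) − V)/‖Y(h) − V‖_F]`, and the map `V ↦ ∇G_h(V)` is itself Fréchet
differentiable at every `V`, with derivative the bounded linear (Hessian) operator
`A ↦ E[(1/‖Y(h) − V‖_F)(A − ⟪Y(h) − V, A⟫_F (Y(h) − V)/‖Y(h) − V‖_F²)]`. -/
theorem stmt_17
    {d : ℕ} (hd : 1 ≤ d) (P : Measure Ω) [IsProbabilityMeasure P]
    (X : Ω → EuclideanSpace ℝ (Fin d)) (hX : Measurable X)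
    -- Assumption 3(a)
    (C : ℝ) (hC : 0 < C)
    (hA3 : ∀ (h : EuclideanSpace ℝ (Fin d)) (V : Mat d),
      (∫⁻ ω, (‖Ymat (X ω) h - V‖₊ : ℝ≥0∞)⁻¹ ∂P) ≤ ENNReal.ofReal C) :
    ∀ (h : EuclideanSpace ℝ (Fin d)) (V : Mat d),
      HasFDerivAt (fun W => Gfun P X h W) (innerSL ℝ (gradG P X h V)) V ∧
      ∃ Hop : Mat d →L[ℝ] Mat d, (∀ A : Mat d, Hop A = hessG P X h V A) ∧
        HasFDerivAt (fun W => gradG P X h W) Hop V :=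
  stmt_17_general P X hX C hA3
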